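/- The map T₄ : (ℂ \ {0})³ → (ℂ \ {0})³ defined by T₄(x,y,z) = (x·z, y·z⁻¹, z²) satisfies the tetrahedron equation T¹²³ ∘ T¹⁴⁵ ∘ T²⁴⁶ ∘ T³⁵⁶ = T³⁵⁶ ∘ T²⁴⁶ ∘ T¹⁴⁵ ∘ T¹²³, i.e. it is a tetrahedron map. Moreover T₄ is noninvolutive: there exists (x,y,z) ∈ (ℂ \ {0})³ with (T₄ ∘ T₄)(x,y,z) ≠ (x,y,z); indeed (T₄ ∘ T₄)(x,y,z) = (x·z³, y·z⁻³, z⁴) for all x,y,z. -/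

import Mathlib

/-! In additive notation a monomial map `(x, y, z) ↦ (x z^a, y z^b, z^c)` on a commutative group is
linear. Comparing the two sides of the tetrahedron equation coordinatewise, they differ only by
powers of the sixth variable with exponents `a(a+b)`, `a(b+c-1)` and `b(b+c-1)`, all of which
vanish for the exponents `(a, b, c) = (1, -1, 2)` of `T₄`. Squaring `T₄` acts as `z ↦ z⁴` on the
last factor, so `T₄ ∘ T₄` moves every point whose last coordinate is not a cube root of unity. -/

section Tetra

variable {X : Type*}

/-- `T` acting on factors 1,2,3 of `X⁶`. -/
def lift123 (T : X × X × X → X × X × X) :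
    X × X × X × X × X × X → X × X × X × X × X × X
  | (a, b, c, d, e, f) =>
    match T (a, b, c) with
    | (a', b', c') => (a', b', c', d, e, f)

/-- `T` acting on factors 1,4,5 of `X⁶`. -/
def lift145 (T : X × X × X → X × X × X) :
    X × X × X × X × X × X → X × X × X × X × X × X
  | (a, b, c, d, e, f) =>
    match T (a, d, e) with
    | (a', d', e') => (a', b, c, d', e', f)

/-- `T` acting on factors 2,4,6 of `X⁶`. -/
def lift246 (T : X × X × X → X × X × X) :
    X × X × X × X × X × X → X × X × X × X × X × X
  | (a, b, c, d, e, f) =>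
    match T (b, d, f) with
    | (b', d', f') => (a, b', c, d', e, f')

/-- `T` acting on factors 3,5,6 of `X⁶`. -/
def lift356 (T : X × X × X → X × X × X) :
    X × X × X × X × X × X → X × X × X × X × X × X
  | (a, b, c, d, e, f) =>
    match T (c, e, f) with
    | (c', e', f') => (a, b, c', d, e', f')

/-- The Zamolodchikov tetrahedron equation for a map `T : X³ → X³`. -/
def IsTetrahedronMap (T : X × X × X → X × X × X) : Prop :=
  lift123 T ∘ lift145 T ∘ lift246 T ∘ lift356 T =
    lift356 T ∘ lift246 T ∘ lift145 T ∘ lift123 T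

end Tetra

/-- The map `T₄(x,y,z) = (x·z, y·z⁻¹, z²)` on `(ℂ \ {0})³`. -/
def T4 : ℂˣ × ℂˣ × ℂˣ → ℂˣ × ℂˣ × ℂˣ :=
  fun (x, y, z) => (x * z, y * z⁻¹, z ^ 2)

def monomialMap (G : Type*) [CommGroup G] (a b c : ℤ) : G × G × G → G × G × G :=
  fun (x, y, z) => (x * z ^ a, y * z ^ b, z ^ c)

theorem isTetrahedronMap_monomialMap {G : Type*} [CommGroup G] {a b c : ℤ}
    (h₁ : a * (a + b) = 0) (h₂ : a * (b + c - 1) = 0) (h₃ : b * (b + c - 1) = 0) :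
    IsTetrahedronMap (monomialMap G a b c) := by
  funext ⟨x₁, x₂, x₃, x₄, x₅, x₆⟩
  simp only [Function.comp, lift123, lift145, lift246, lift356, monomialMap, Prod.mk.injEq]
  refine ⟨?_, ?_, ?_, ?_, ?_, trivial⟩ <;> apply Additive.ofMul.injective <;>
    simp only [ofMul_mul, ofMul_zpow]
  · linear_combination (norm := module) h₁ • Additive.ofMul x₆
  · linear_combination (norm := module) h₂ • Additive.ofMul x₆
  · module
  · linear_combination (norm := module) h₃ • Additive.ofMul x₆
  · module

theorem T4_eq_monomialMap : T4 = monomialMap ℂˣ 1 (-1) 2 := by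
  funext ⟨x, y, z⟩
  simp only [T4, monomialMap, zpow_neg_one, zpow_ofNat, pow_one]

theorem isTetrahedronMap_T4 : IsTetrahedronMap T4 :=
  T4_eq_monomialMap ▸ isTetrahedronMap_monomialMap (by norm_num) (by norm_num) (by norm_num)

theorem T4_comp_self_apply (x y z : ℂˣ) :
    (T4 ∘ T4) (x, y, z) = (x * z ^ 3, y * (z ^ 3)⁻¹, z ^ 4) := by
  simp only [Function.comp, T4]
  refine Prod.ext ?_ (Prod.ext ?_ ?_) <;> group

theorem T4_comp_self_apply_eq_self_iff (x y z : ℂˣ) :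
    (T4 ∘ T4) (x, y, z) = (x, y, z) ↔ z ^ 3 = 1 := by
  rw [T4_comp_self_apply]
  simp only [Prod.mk.injEq, mul_eq_left, inv_eq_one]
  refine ⟨And.left, fun h => ⟨h, h, ?_⟩⟩
  rw [pow_succ, h, one_mul]

theorem T4_isTetrahedronMap_noninvolutive :
    IsTetrahedronMap T4 ∧
    (∀ x y z : ℂˣ, (T4 ∘ T4) (x, y, z) = (x * z ^ 3, y * (z ^ 3)⁻¹, z ^ 4)) ∧
    (∃ x y z : ℂˣ, (T4 ∘ T4) (x, y, z) ≠ (x, y, z)) := by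
  refine ⟨isTetrahedronMap_T4, T4_comp_self_apply, 1, 1, -1, ?_⟩
  rw [Ne, T4_comp_self_apply_eq_self_iff, Odd.neg_one_pow (by decide)]
  exact neg_units_ne_self 1
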